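/- arXiv:2506.08393 — 5 statements merged into one kernel-verified Lean document; each statement's English description precedes it below -/
import Mathlib

section
/- Let K be a field with char K ≠ 2, let g be a finite-dimensional Lie algebra over K, let θ : g → g be a Lie algebra automorphism with θ ∘ θ = id, and let X₀ ∈ g satisfy θ(X₀) = −X₀. Let m = {Y ∈ g : ⁅X₀, Y⁆ = 0} be the centralizer of X₀, and suppose n ⊆ g is a K-subspace with ⁅X₀, n⁆ ⊆ n such that g is the internal direct sum g = θ(n) ⊕ m ⊕ n of K-subspaces. Then one has the equality of K-subspaces ⁅X₀, ⁅X₀, h⁆⁆ = ⁅X₀, g⁻⁆, where h = {X ∈ g : θ(X) = X}, g⁻ = {X ∈ g : θ(X) = −X}, and for a subspace W ⊆ g the notation ⁅X₀, W⁆ denotes the subspace spanned by all ⁅X₀, w⁆ with w ∈ W. (Abstract form of Lemma 2.4: these hypotheses hold after base change to a splitting field, with X₀ a regular element of the split maximally θ-split torus, m the Levi factor centralizing it, and n the nilpotent radical of the associated minimal θ-split parabolic.) -/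
/-!
Since `θ X₀ = -X₀`, the operator `ad X₀` anticommutes with `θ`; hence it maps `h` into
`g⁻`, which gives `⊆`. Conversely, write `Z ∈ g⁻` as `θ a + b + c` with `a, c ∈ n`, `b ∈ m`.
Comparing `n`-components in `θ Z = -Z` gives `c = -a`. As `ad X₀` is injective on `n` (its
kernel is `m`) and preserves the finite-dimensional space `n`, we can write `a = ⁅X₀, c'⁆`
with `c' ∈ n`. Then `ad X₀ (-(θ c' + c')) = θ a - a`, and `-(θ c' + c') ∈ h`, while
`⁅X₀, Z⁆ = ⁅X₀, θ a - a⁆` because `b` centralizes `X₀`.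
-/

theorem LieHom.lie_map_of_map_eq_neg {R L : Type*} [CommRing R] [LieRing L] [LieAlgebra R L]
    (θ : L →ₗ⁅R⁆ L) {X : L} (hX : θ X = -X) (Y : L) : ⁅X, θ Y⁆ = -θ ⁅X, Y⁆ := by
  rw [LieHom.map_lie, hX, neg_lie, neg_neg]

theorem LieHom.map_lie_of_map_eq_neg_of_map_eq {R L : Type*} [CommRing R] [LieRing L]
    [LieAlgebra R L] (θ : L →ₗ⁅R⁆ L) {X Y : L} (hX : θ X = -X) (hY : θ Y = Y) :
    θ ⁅X, Y⁆ = -⁅X, Y⁆ := by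
  rw [LieHom.map_lie, hX, hY, neg_lie]

theorem Submodule.map_eq_self_of_disjoint_ker {K V : Type*} [DivisionRing K] [AddCommGroup V]
    [Module K V] [FiniteDimensional K V] {f : V →ₗ[K] V} {N : Submodule K V}
    (hN : N.map f ≤ N) (hker : Disjoint N (LinearMap.ker f)) : N.map f = N := by
  have hmaps : ∀ x ∈ N, f x ∈ N := fun x hx => hN (mem_map_of_mem hx)
  have hsurj : Function.Surjective (f.restrict hmaps) :=
    LinearMap.injective_iff_surjective.mp ((LinearMap.injective_restrict_iff hmaps).mpr hker)
  refine le_antisymm hN fun x hx => ?_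
  obtain ⟨y, hy⟩ := hsurj ⟨x, hx⟩
  exact ⟨y, y.2, congrArg Subtype.val hy⟩

theorem exists_eq_map_sub_add_of_map_eq_neg {R M : Type*} [Ring R] [AddCommGroup M] [Module R M]
    {θ : M →ₗ[R] M} (hθθ : ∀ x, θ (θ x) = x) {m n : Submodule R M} (hm : ∀ b ∈ m, θ b ∈ m)
    (hdisj : Disjoint n (n.map θ ⊔ m)) {Z : M} (hZ : Z ∈ n.map θ ⊔ m ⊔ n) (hθZ : θ Z = -Z) :
    ∃ a ∈ n, ∃ b ∈ m, Z = θ a - a + b := by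
  obtain ⟨u, hu, c, hc, rfl⟩ := Submodule.mem_sup.mp hZ
  obtain ⟨_, ⟨a, ha, rfl⟩, b, hb, rfl⟩ := Submodule.mem_sup.mp hu
  have hsum : θ (θ a + b + c) + (θ a + b + c) = 0 := by rw [hθZ, neg_add_cancel]
  rw [map_add, map_add, hθθ] at hsum
  have hac : a + c = 0 := by
    refine Submodule.disjoint_def.mp hdisj _ (n.add_mem ha hc) ?_
    have : a + c = -θ (a + c) - (θ b + b) := by
      rw [map_add, ← sub_eq_zero, ← hsum]; abel
    rw [this]
    exact sub_mem (neg_mem (Submodule.mem_sup_left (Submodule.mem_map_of_mem (n.add_mem ha hc))))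
      (Submodule.mem_sup_right (m.add_mem (hm b hb) hb))
  refine ⟨a, ha, b, hb, ?_⟩
  rw [eq_neg_of_add_eq_zero_right hac]
  abel

theorem lemma_2_4_general {K : Type*} [Field K]
    {g : Type*} [LieRing g] [LieAlgebra K g] [FiniteDimensional K g]
    (θ : g →ₗ⁅K⁆ g) (hθθ : ∀ X, θ (θ X) = X)
    (X₀ : g) (hX₀ : θ X₀ = -X₀)
    (h gneg m n : Submodule K g)
    (hmem_h : ∀ X, X ∈ h ↔ θ X = X)
    (hmem_gneg : ∀ X, X ∈ gneg ↔ θ X = -X)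
    (hmem_m : ∀ Y, Y ∈ m ↔ ⁅X₀, Y⁆ = 0)
    (hn_stable : Submodule.map (LieAlgebra.ad K g X₀) n ≤ n)
    (hdirect : DirectSum.IsInternal ![Submodule.map θ.toLinearMap n, m, n]) :
    Submodule.map (LieAlgebra.ad K g X₀)
        (Submodule.map (LieAlgebra.ad K g X₀) h)
      = Submodule.map (LieAlgebra.ad K g X₀) gneg := by
  have hanti := θ.lie_map_of_map_eq_neg hX₀
  have hmθ : ∀ b ∈ m, θ b ∈ m := fun b hb => by
    rw [hmem_m] at hb ⊢
    rw [hanti, hb, map_zero, neg_zero]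
  have hindep := iSupIndep_fin_three.mp hdirect.submodule_iSupIndep
  have hn : Disjoint n (n.map θ.toLinearMap ⊔ m) := hindep.2.2
  have hmn : Disjoint m n := hindep.2.1.mono_right le_sup_left
  have htop : n.map θ.toLinearMap ⊔ m ⊔ n = ⊤ := by simpa using hdirect.submodule_iSup_eq_top
  have hker : LinearMap.ker (LieAlgebra.ad K g X₀) = m := by
    ext Y
    rw [hmem_m]
    rfl
  have hn_ad : n ≤ n.map (LieAlgebra.ad K g X₀) :=
    (Submodule.map_eq_self_of_disjoint_ker hn_stable (hker ▸ hmn.symm)).ge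
  apply le_antisymm
  · refine Submodule.map_mono ?_
    rintro _ ⟨X, hX, rfl⟩
    exact (hmem_gneg _).mpr (θ.map_lie_of_map_eq_neg_of_map_eq hX₀ ((hmem_h X).mp hX))
  · rintro _ ⟨Z, hZ, rfl⟩
    obtain ⟨a, ha, b, hb, rfl⟩ := exists_eq_map_sub_add_of_map_eq_neg hθθ hmθ hn
      (htop ▸ Submodule.mem_top) ((hmem_gneg Z).mp hZ)
    obtain ⟨c, hc, rfl⟩ := hn_ad ha
    refine ⟨_, ⟨-(θ c + c), (hmem_h _).mpr ?_, rfl⟩, ?_⟩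
    · rw [map_neg, map_add, hθθ, add_comm]
    · simp only [LieHom.coe_toLinearMap, LieAlgebra.ad_apply, lie_neg, lie_add, lie_sub, hanti,
        (hmem_m b).mp hb]
      abel

/-- Abstract form of Lemma 2.4 of "On relative cuspidality":
under the stated direct sum decomposition `g = θ(n) ⊕ m ⊕ n`,
one has `⁅X₀, ⁅X₀, h⁆⁆ = ⁅X₀, g⁻⁆`. -/
theorem lemma_2_4 {K : Type*} [Field K] (hchar : (2 : K) ≠ 0)
    {g : Type*} [LieRing g] [LieAlgebra K g] [FiniteDimensional K g]
    (θ : g →ₗ⁅K⁆ g) (hθθ : ∀ X, θ (θ X) = X)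
    (X₀ : g) (hX₀ : θ X₀ = -X₀)
    (h gneg m n : Submodule K g)
    (hmem_h : ∀ X, X ∈ h ↔ θ X = X)
    (hmem_gneg : ∀ X, X ∈ gneg ↔ θ X = -X)
    (hmem_m : ∀ Y, Y ∈ m ↔ ⁅X₀, Y⁆ = 0)
    (hn_stable : Submodule.map (LieAlgebra.ad K g X₀) n ≤ n)
    (hdirect : DirectSum.IsInternal ![Submodule.map θ.toLinearMap n, m, n]) :
    Submodule.map (LieAlgebra.ad K g X₀)
        (Submodule.map (LieAlgebra.ad K g X₀) h)
      = Submodule.map (LieAlgebra.ad K g X₀) gneg :=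
  lemma_2_4_general θ hθθ X₀ hX₀ h gneg m n hmem_h hmem_gneg hmem_m hn_stable hdirect
end

section
/- Let K be a field with char K ≠ 2, let g be a finite-dimensional Lie algebra over K, let θ : g → g be a Lie algebra automorphism with θ ∘ θ = id, and let X₀ ∈ g satisfy θ(X₀) = −X₀. Let m = {Y ∈ g : ⁅X₀, Y⁆ = 0}, and suppose n ⊆ g is a K-subspace with ⁅X₀, n⁆ ⊆ n such that g = θ(n) ⊕ m ⊕ n is an internal direct sum of K-subspaces. Then the K-linear map n → g defined by N ↦ ⁅X₀, ⁅X₀, N + θ(N)⁆⁆ is injective. -/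
/-!
Put `N = N₁ - N₂ ∈ n`, so that `⁅X₀, ⁅X₀, N + θ N⁆⁆ = 0`, and let `W = ⁅X₀, N⁆ ∈ n`.
Since `θ` reverses the sign of `X₀`, `θ W = -⁅X₀, θ N⁆`, hence `W - θ W = ⁅X₀, N + θ N⁆` lies in the
centralizer `m`. Thus `W ∈ n ∩ (θ n + m) = 0`, so `N` centralizes `X₀` and `N ∈ n ∩ m = 0`.
-/

theorem iSupIndep.disjoint_sup_of_fin_three {α : Type*} [CompleteLattice α] {a b c : α}
    (h : iSupIndep ![a, b, c]) : Disjoint c (a ⊔ b) := by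
  have hc : (2 : Fin 3) ∉ ({0, 1} : Set (Fin 3)) := by decide
  simpa [iSup_pair] using h.disjoint_biSup hc

theorem Submodule.eq_zero_of_mem_of_sub_apply_mem {R M : Type*} [Ring R] [AddCommGroup M]
    [Module R M] {p q : Submodule R M} (f : M →ₗ[R] M) (hpq : Disjoint p (p.map f ⊔ q))
    {w : M} (hw : w ∈ p) (hwf : w - f w ∈ q) : w = 0 := by
  refine (Submodule.disjoint_def.mp hpq) w hw ?_
  simpa using Submodule.add_mem_sup (Submodule.mem_map_of_mem (f := f) hw) hwf

theorem eq_zero_of_lie_lie_add_eq_zero {K g : Type*} [CommRing K] [LieRing g] [LieAlgebra K g]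
    (θ : g →ₗ⁅K⁆ g) {X₀ : g} (hX₀ : θ X₀ = -X₀) {m n : Submodule K g}
    (hm : ∀ Y, ⁅X₀, Y⁆ = 0 → Y ∈ m) (hn : Submodule.map (LieAlgebra.ad K g X₀) n ≤ n)
    (hdisj : Disjoint n (n.map θ.toLinearMap ⊔ m)) {N : g} (hN : N ∈ n)
    (h : ⁅X₀, ⁅X₀, N + θ N⁆⁆ = 0) : N = 0 := by
  have hW : ⁅X₀, N⁆ ∈ n := hn ⟨N, hN, rfl⟩
  have hW_sub : ⁅X₀, N⁆ - θ ⁅X₀, N⁆ = ⁅X₀, N + θ N⁆ := by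
    rw [LieHom.map_lie, hX₀, neg_lie, lie_add, sub_neg_eq_add]
  have hW_zero : ⁅X₀, N⁆ = 0 :=
    Submodule.eq_zero_of_mem_of_sub_apply_mem θ.toLinearMap hdisj hW (hW_sub ▸ hm _ h)
  exact Submodule.disjoint_def.mp hdisj N hN (Submodule.mem_sup_right (hm N hW_zero))

theorem lemma_2_4_injectivity_general {K : Type*} [Field K]
    {g : Type*} [LieRing g] [LieAlgebra K g]
    (θ : g →ₗ⁅K⁆ g)
    (X₀ : g) (hX₀ : θ X₀ = -X₀)
    (m n : Submodule K g)
    (hmem_m : ∀ Y, Y ∈ m ↔ ⁅X₀, Y⁆ = 0)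
    (hn_stable : Submodule.map (LieAlgebra.ad K g X₀) n ≤ n)
    (hdirect : DirectSum.IsInternal ![Submodule.map θ.toLinearMap n, m, n]) :
    ∀ N₁ N₂ : g, N₁ ∈ n → N₂ ∈ n →
      ⁅X₀, ⁅X₀, N₁ + θ N₁⁆⁆ = ⁅X₀, ⁅X₀, N₂ + θ N₂⁆⁆ → N₁ = N₂ := by
  intro N₁ N₂ h₁ h₂ heq
  rw [← sub_eq_zero]
  refine eq_zero_of_lie_lie_add_eq_zero θ hX₀ (fun Y => (hmem_m Y).2) hn_stable
    hdirect.submodule_iSupIndep.disjoint_sup_of_fin_three (sub_mem h₁ h₂) ?_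
  rw [map_sub, sub_add_sub_comm, lie_sub, lie_sub, heq, sub_self]

/-- Key injectivity step in the proof of Lemma 2.4 of "On relative cuspidality":
the map `N ↦ ⁅X₀, ⁅X₀, N + θ(N)⁆⁆` is injective on `n`. -/
theorem lemma_2_4_injectivity {K : Type*} [Field K] (hchar : (2 : K) ≠ 0)
    {g : Type*} [LieRing g] [LieAlgebra K g] [FiniteDimensional K g]
    (θ : g →ₗ⁅K⁆ g) (hθθ : ∀ X, θ (θ X) = X)
    (X₀ : g) (hX₀ : θ X₀ = -X₀)
    (m n : Submodule K g)
    (hmem_m : ∀ Y, Y ∈ m ↔ ⁅X₀, Y⁆ = 0)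
    (hn_stable : Submodule.map (LieAlgebra.ad K g X₀) n ≤ n)
    (hdirect : DirectSum.IsInternal ![Submodule.map θ.toLinearMap n, m, n]) :
    ∀ N₁ N₂ : g, N₁ ∈ n → N₂ ∈ n →
      ⁅X₀, ⁅X₀, N₁ + θ N₁⁆⁆ = ⁅X₀, ⁅X₀, N₂ + θ N₂⁆⁆ → N₁ = N₂ :=
  lemma_2_4_injectivity_general θ X₀ hX₀ m n hmem_m hn_stable hdirect
end

section
/- Let K be a field with char K ≠ 2, let g be a finite-dimensional Lie algebra over K, let θ : g → g be a Lie algebra automorphism with θ ∘ θ = id, and let X₀ ∈ g satisfy θ(X₀) = −X₀. Let m = {Y ∈ g : ⁅X₀, Y⁆ = 0}, and suppose n ⊆ g is a K-subspace with ⁅X₀, n⁆ ⊆ n such that g = θ(n) ⊕ m ⊕ n is an internal direct sum of K-subspaces. Then every X ∈ g with θ(X) = −X can be written uniquely as X = (N − θ(N)) + M with N ∈ n and M ∈ m satisfying θ(M) = −M. -/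
/-!
The centralizer `m` of `X₀` is `θ`-stable because `θ X₀ = -X₀`, and `θ` swaps `n` and `θ(n)`.
Write `X = θ a + b + c` along `θ(n) ⊕ m ⊕ n` with `a, c ∈ n`. Then
`0 = θ X + X = θ (a + c) + (θ b + b) + (a + c)` is again split along the three summands,
so `a = -c` and `θ b = -b`, i.e. `X = (c - θ c) + b`. Uniqueness is the independence
of the summands applied to the difference of two such expressions.
-/

namespace DirectSum.IsInternal

variable {R M : Type*} [Ring R] [AddCommGroup M] [Module R M] {A B C : Submodule R M}

theorem exists_add_add_eq_of_fin_three (h : IsInternal ![A, B, C]) (x : M) :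
    ∃ a ∈ A, ∃ b ∈ B, ∃ c ∈ C, a + b + c = x := by
  have hx : x ∈ A ⊔ B ⊔ C := by
    simpa using h.submodule_iSup_eq_top.ge (Submodule.mem_top (x := x))
  obtain ⟨_, hab, c, hc, rfl⟩ := Submodule.mem_sup.mp hx
  obtain ⟨a, ha, b, hb, rfl⟩ := Submodule.mem_sup.mp hab
  exact ⟨a, ha, b, hb, c, hc, rfl⟩

theorem eq_zero_of_add_add_eq_zero_of_fin_three (h : IsInternal ![A, B, C]) {a b c : M}
    (ha : a ∈ A) (hb : b ∈ B) (hc : c ∈ C) (habc : a + b + c = 0) :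
    a = 0 ∧ b = 0 ∧ c = 0 := by
  obtain ⟨hA, hB, -⟩ := iSupIndep_fin_three.mp h.submodule_iSupIndep
  have ha0 : a = 0 := Submodule.disjoint_def.mp hA a ha <| by
    rw [show a = -(b + c) by grind]
    exact neg_mem (Submodule.add_mem_sup hb hc)
  have hb0 : b = 0 := Submodule.disjoint_def.mp hB b hb <| by
    rw [show b = -(c + a) by grind]
    exact neg_mem (Submodule.add_mem_sup hc ha)
  exact ⟨ha0, hb0, by simpa [ha0, hb0] using habc⟩

end DirectSum.IsInternal

namespace LinearMap

open Function DirectSum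

variable {R V : Type*} [Ring R] [AddCommGroup V] [Module R V] {θ : V →ₗ[R] V}
  {m n : Submodule R V}

theorem eq_of_sub_apply_add_eq_of_isInternal (h : IsInternal ![n.map θ, m, n])
    {N N' M M' : V} (hN : N ∈ n) (hN' : N' ∈ n) (hM : M ∈ m) (hM' : M' ∈ m)
    (heq : N - θ N + M = N' - θ N' + M') : N = N' ∧ M = M' := by
  have hsum : θ (N' - N) + (M - M') + (N - N') = 0 := by
    rw [map_sub]; grind
  obtain ⟨-, hM0, hN0⟩ := h.eq_zero_of_add_add_eq_zero_of_fin_three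
    (Submodule.mem_map_of_mem (sub_mem hN' hN)) (sub_mem hM hM') (sub_mem hN hN') hsum
  exact ⟨sub_eq_zero.mp hN0, sub_eq_zero.mp hM0⟩

theorem exists_sub_apply_add_of_isInternal (hθ : Involutive θ) (hm : ∀ y ∈ m, θ y ∈ m)
    (h : IsInternal ![n.map θ, m, n]) {X : V} (hX : θ X = -X) :
    ∃ N ∈ n, ∃ M ∈ m, θ M = -M ∧ X = N - θ N + M := by
  obtain ⟨_, ⟨a, ha, rfl⟩, b, hb, c, hc, rfl⟩ := h.exists_add_add_eq_of_fin_three X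
  have hsum : θ (a + c) + (θ b + b) + (a + c) = 0 := by
    simp only [map_add, hθ a] at hX ⊢
    grind
  obtain ⟨-, hb0, hac⟩ := h.eq_zero_of_add_add_eq_zero_of_fin_three
    (Submodule.mem_map_of_mem (add_mem ha hc)) (add_mem (hm b hb) hb) (add_mem ha hc) hsum
  refine ⟨c, hc, b, hb, eq_neg_of_add_eq_zero_left hb0, ?_⟩
  rw [eq_neg_of_add_eq_zero_left hac, map_neg]
  abel

theorem existsUnique_sub_apply_add_of_isInternal (hθ : Involutive θ)
    (hm : ∀ y ∈ m, θ y ∈ m) (h : IsInternal ![n.map θ, m, n]) {X : V} (hX : θ X = -X) :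
    ∃! NM : V × V, NM.1 ∈ n ∧ NM.2 ∈ m ∧ θ NM.2 = -NM.2 ∧ X = NM.1 - θ NM.1 + NM.2 := by
  obtain ⟨N, hN, M, hM, hθM, rfl⟩ := exists_sub_apply_add_of_isInternal hθ hm h hX
  refine ⟨(N, M), ⟨hN, hM, hθM, rfl⟩, fun ⟨N', M'⟩ ⟨hN', hM', _, heq⟩ => ?_⟩
  obtain ⟨rfl, rfl⟩ := eq_of_sub_apply_add_eq_of_isInternal h hN' hN hM' hM heq.symm
  rfl

end LinearMap

theorem LieHom.lie_map_eq_zero_of_map_eq_neg {R L : Type*} [CommRing R] [LieRing L]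
    [LieAlgebra R L] (θ : L →ₗ⁅R⁆ L) {X₀ Y : L} (hX₀ : θ X₀ = -X₀) (hY : ⁅X₀, Y⁆ = 0) :
    ⁅X₀, θ Y⁆ = 0 := by
  have h := θ.map_lie X₀ Y
  rw [hY, map_zero, hX₀, neg_lie, eq_comm, neg_eq_zero] at h
  exact h

theorem lemma_2_4_decomposition_general {K : Type*} [Field K]
    {g : Type*} [LieRing g] [LieAlgebra K g]
    (θ : g →ₗ⁅K⁆ g) (hθθ : ∀ X, θ (θ X) = X)
    (X₀ : g) (hX₀ : θ X₀ = -X₀)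
    (m n : Submodule K g)
    (hmem_m : ∀ Y, Y ∈ m ↔ ⁅X₀, Y⁆ = 0)
    (hdirect : DirectSum.IsInternal ![Submodule.map θ.toLinearMap n, m, n]) :
    ∀ X : g, θ X = -X →
      ∃! NM : g × g, NM.1 ∈ n ∧ NM.2 ∈ m ∧ θ NM.2 = -NM.2 ∧
        X = (NM.1 - θ NM.1) + NM.2 := by
  have hm : ∀ Y ∈ m, θ Y ∈ m := fun Y hY =>
    (hmem_m _).mpr (θ.lie_map_eq_zero_of_map_eq_neg hX₀ ((hmem_m Y).mp hY))
  exact fun X hX => LinearMap.existsUnique_sub_apply_add_of_isInternal (θ := θ.toLinearMap)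
    hθθ hm hdirect hX

/-- Decomposition step in the proof of Lemma 2.4 of "On relative cuspidality":
every `X ∈ g⁻` can be written uniquely as `X = (N - θ(N)) + M` with `N ∈ n`
and `M ∈ m ∩ g⁻`. -/
theorem lemma_2_4_decomposition {K : Type*} [Field K] (hchar : (2 : K) ≠ 0)
    {g : Type*} [LieRing g] [LieAlgebra K g] [FiniteDimensional K g]
    (θ : g →ₗ⁅K⁆ g) (hθθ : ∀ X, θ (θ X) = X)
    (X₀ : g) (hX₀ : θ X₀ = -X₀)
    (m n : Submodule K g)
    (hmem_m : ∀ Y, Y ∈ m ↔ ⁅X₀, Y⁆ = 0)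
    (hn_stable : Submodule.map (LieAlgebra.ad K g X₀) n ≤ n)
    (hdirect : DirectSum.IsInternal ![Submodule.map θ.toLinearMap n, m, n]) :
    ∀ X : g, θ X = -X →
      ∃! NM : g × g, NM.1 ∈ n ∧ NM.2 ∈ m ∧ θ NM.2 = -NM.2 ∧
        X = (NM.1 - θ NM.1) + NM.2 :=
  lemma_2_4_decomposition_general θ hθθ X₀ hX₀ m n hmem_m hdirect
end

section
/- Let K be a field with char K ≠ 2, let g be a finite-dimensional Lie algebra over K, let θ : g → g be a Lie algebra automorphism with θ ∘ θ = id, and let X₀ ∈ g satisfy θ(X₀) = −X₀. Let m = {Y ∈ g : ⁅X₀, Y⁆ = 0}, and suppose n ⊆ g is a K-subspace with ⁅X₀, n⁆ ⊆ n such that g = θ(n) ⊕ m ⊕ n is an internal direct sum of K-subspaces. Then for every X ∈ g with θ(X) = −X there exists N ∈ n with ⁅X₀, X⁆ = ⁅X₀, N − θ(N)⁆; in particular, dim_K ⁅X₀, g⁻⁆ ≤ dim_K n, where g⁻ = {X ∈ g : θ(X) = −X} and ⁅X₀, g⁻⁆ is the K-span of {⁅X₀, X⁆ : X ∈ g⁻}.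 -/
/-!
The map `Y ↦ ⁅X₀, Y - θ Y⁆` changes sign under `θ` (as `θ² = 1`) and vanishes on the
centralizer `m` (as `θ X₀ = -X₀` makes `θ` preserve `m`). Hence on `g = θ(n) + m + n` its range
is its image of `n`. On the `-1`-eigenspace of `θ` it is `2 ⁅X₀, ·⁆`, so dividing by `2` gives
the `N`, and `⁅X₀, g⁻⁆` lies in the image of `n`.
-/

theorem Submodule.sup_sup_eq_top_of_isInternal {R M : Type*} [Ring R] [AddCommGroup M]
    [Module R M] {A B C : Submodule R M} (h : DirectSum.IsInternal ![A, B, C]) :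
    A ⊔ B ⊔ C = ⊤ := by
  rw [← h.submodule_iSup_eq_top, iSup_fin_three]
  rfl

namespace LieHom

variable {K g : Type*} [CommRing K] [LieRing g] [LieAlgebra K g] (θ : g →ₗ⁅K⁆ g) (X₀ : g)

def adSkew : g →ₗ[K] g :=
  LieAlgebra.ad K g X₀ ∘ₗ (LinearMap.id - θ.toLinearMap)

@[simp]
theorem adSkew_apply (Y : g) : θ.adSkew X₀ Y = ⁅X₀, Y - θ Y⁆ :=
  rfl

variable {θ X₀}

theorem adSkew_comp_eq_neg (hθθ : ∀ X, θ (θ X) = X) :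
    θ.adSkew X₀ ∘ₗ θ.toLinearMap = -θ.adSkew X₀ := by
  ext Y
  simp [hθθ]

theorem lie_apply_eq_zero_of_lie_eq_zero (hX₀ : θ X₀ = -X₀) {Y : g} (hY : ⁅X₀, Y⁆ = 0) :
    ⁅X₀, θ Y⁆ = 0 := by
  have h := θ.map_lie X₀ Y
  rw [hY, map_zero, hX₀, neg_lie] at h
  exact neg_eq_zero.mp h.symm

theorem adSkew_eq_zero_of_lie_eq_zero (hX₀ : θ X₀ = -X₀) {Y : g} (hY : ⁅X₀, Y⁆ = 0) :
    θ.adSkew X₀ Y = 0 := by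
  simp [lie_sub, hY, lie_apply_eq_zero_of_lie_eq_zero hX₀ hY]

theorem adSkew_of_map_eq_neg {X : g} (hX : θ X = -X) : θ.adSkew X₀ X = (2 : K) • ⁅X₀, X⁆ := by
  simp [hX, two_smul]

theorem range_adSkew_eq_map (hθθ : ∀ X, θ (θ X) = X) (hX₀ : θ X₀ = -X₀)
    {m n : Submodule K g} (hm : ∀ Y ∈ m, ⁅X₀, Y⁆ = 0)
    (htop : n.map θ.toLinearMap ⊔ m ⊔ n = ⊤) :
    LinearMap.range (θ.adSkew X₀) = n.map (θ.adSkew X₀) := by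
  have hm_zero : m.map (θ.adSkew X₀) = ⊥ :=
    LinearMap.le_ker_iff_map.mp fun Y hY => adSkew_eq_zero_of_lie_eq_zero hX₀ (hm Y hY)
  rw [← Submodule.map_top, ← htop, Submodule.map_sup, Submodule.map_sup, ← Submodule.map_comp,
    adSkew_comp_eq_neg hθθ, Submodule.map_neg, hm_zero, sup_bot_eq, sup_idem]

end LieHom

theorem lemma_2_4_upper_bound_general {K : Type*} [Field K] (hchar : (2 : K) ≠ 0)
    {g : Type*} [LieRing g] [LieAlgebra K g] [FiniteDimensional K g]
    (θ : g →ₗ⁅K⁆ g) (hθθ : ∀ X, θ (θ X) = X)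
    (X₀ : g) (hX₀ : θ X₀ = -X₀)
    (gneg m n : Submodule K g)
    (hmem_gneg : ∀ X, X ∈ gneg ↔ θ X = -X)
    (hmem_m : ∀ Y, Y ∈ m ↔ ⁅X₀, Y⁆ = 0)
    (hdirect : DirectSum.IsInternal ![Submodule.map θ.toLinearMap n, m, n]) :
    (∀ X : g, θ X = -X → ∃ N ∈ n, ⁅X₀, X⁆ = ⁅X₀, N - θ N⁆) ∧
      Module.finrank K (Submodule.map (LieAlgebra.ad K g X₀) gneg)
        ≤ Module.finrank K n := by
  have hrange := LieHom.range_adSkew_eq_map hθθ hX₀ (fun Y hY => (hmem_m Y).mp hY)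
    (Submodule.sup_sup_eq_top_of_isInternal hdirect)
  have key : ∀ X : g, θ X = -X → ∃ N ∈ n, ⁅X₀, X⁆ = ⁅X₀, N - θ N⁆ := by
    intro X hX
    obtain ⟨N, hN, hNX⟩ : θ.adSkew X₀ X ∈ n.map (θ.adSkew X₀) :=
      hrange ▸ LinearMap.mem_range_self _ X
    refine ⟨(2 : K)⁻¹ • N, n.smul_mem _ hN, ?_⟩
    rw [← LieHom.adSkew_apply, map_smul, hNX, LieHom.adSkew_of_map_eq_neg hX,
      inv_smul_smul₀ hchar]
  refine ⟨key, ?_⟩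
  have hle : gneg.map (LieAlgebra.ad K g X₀) ≤ n.map (θ.adSkew X₀) := by
    rintro _ ⟨X, hX, rfl⟩
    obtain ⟨N, hN, hXN⟩ := key X ((hmem_gneg X).mp hX)
    exact ⟨N, hN, hXN.symm⟩
  exact (Submodule.finrank_mono hle).trans (Submodule.finrank_map_le _ n)

/-- Upper bound step in the proof of Lemma 2.4 of "On relative cuspidality":
for every `X ∈ g⁻` there exists `N ∈ n` with `⁅X₀, X⁆ = ⁅X₀, N - θ(N)⁆`;
in particular `dim ⁅X₀, g⁻⁆ ≤ dim n`. -/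
theorem lemma_2_4_upper_bound {K : Type*} [Field K] (hchar : (2 : K) ≠ 0)
    {g : Type*} [LieRing g] [LieAlgebra K g] [FiniteDimensional K g]
    (θ : g →ₗ⁅K⁆ g) (hθθ : ∀ X, θ (θ X) = X)
    (X₀ : g) (hX₀ : θ X₀ = -X₀)
    (gneg m n : Submodule K g)
    (hmem_gneg : ∀ X, X ∈ gneg ↔ θ X = -X)
    (hmem_m : ∀ Y, Y ∈ m ↔ ⁅X₀, Y⁆ = 0)
    (hn_stable : Submodule.map (LieAlgebra.ad K g X₀) n ≤ n)
    (hdirect : DirectSum.IsInternal ![Submodule.map θ.toLinearMap n, m, n]) :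
    (∀ X : g, θ X = -X → ∃ N ∈ n, ⁅X₀, X⁆ = ⁅X₀, N - θ N⁆) ∧
      Module.finrank K (Submodule.map (LieAlgebra.ad K g X₀) gneg)
        ≤ Module.finrank K n :=
  lemma_2_4_upper_bound_general hchar θ hθθ X₀ hX₀ gneg m n hmem_gneg hmem_m hdirect
end

section
/- Let K be a field, let g be a finite-dimensional Lie algebra over K, let θ : g → g be a Lie algebra automorphism with θ ∘ θ = id, and let X₀ ∈ g satisfy θ(X₀) = −X₀. Set h = {X ∈ g : θ(X) = X}, g⁻ = {X ∈ g : θ(X) = −X}, and t⁻ = {Y ∈ g⁻ : ⁅X₀, Y⁆ = 0}. Assume the equality of subspaces ⁅X₀, ⁅X₀, h⁆⁆ = ⁅X₀, g⁻⁆ (where ⁅X₀, W⁆ denotes the span of {⁅X₀, w⁆ : w ∈ W}). Then the K-linear map v : h × t⁻ → g⁻ defined by v(X, T) = ⁅X, X₀⁆ + T is surjective. (This is the submersion computation at the heart of Theorem 2.5: the differential of the map (h, X) ↦ Ad(h)X at (e, X₀) is surjective, which proves that Ad(H)·t⁻_reg is open in g⁻.) -/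
/-! Bracketing `⁅X₀, Y⁆` against the hypothesis writes it as `⁅X₀, ⁅X₀, Z⁆⁆` with `Z ∈ h`, so
`T := Y - ⁅X₀, Z⁆` commutes with `X₀`. Since `θ` negates `X₀` and fixes `Z`, it negates `⁅X₀, Z⁆`,
hence `T ∈ t⁻`, and `Y = ⁅-Z, X₀⁆ + T`. -/

theorem LinearMap.exists_mem_map_sub_eq_zero_of_map_mem_map_map {R M : Type*} [Semiring R]
    [AddCommGroup M] [Module R M] (f : M →ₗ[R] M) {p : Submodule R M} {y : M}
    (hy : f y ∈ (p.map f).map f) : ∃ z ∈ p, f (y - f z) = 0 := by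
  obtain ⟨_, ⟨z, hz, rfl⟩, hfz⟩ := hy
  exact ⟨z, hz, by rw [map_sub, hfz, sub_self]⟩

theorem LieHom.map_lie_eq_neg_of_map_eq_neg_of_map_eq {R L : Type*} [CommRing R] [LieRing L]
    [LieAlgebra R L] (θ : L →ₗ⁅R⁆ L) {x z : L} (hx : θ x = -x) (hz : θ z = z) :
    θ ⁅x, z⁆ = -⁅x, z⁆ := by
  rw [LieHom.map_lie, hx, hz, neg_lie]

theorem theorem_2_5_submersion_general {K : Type*} [Field K]
    {g : Type*} [LieRing g] [LieAlgebra K g]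
    (θ : g →ₗ⁅K⁆ g)
    (X₀ : g) (hX₀ : θ X₀ = -X₀)
    (h gneg : Submodule K g)
    (hmem_h : ∀ X, X ∈ h ↔ θ X = X)
    (hmem_gneg : ∀ X, X ∈ gneg ↔ θ X = -X)
    (hkey : Submodule.map (LieAlgebra.ad K g X₀)
        (Submodule.map (LieAlgebra.ad K g X₀) h)
      = Submodule.map (LieAlgebra.ad K g X₀) gneg) :
    ∀ Y : g, θ Y = -Y →
      ∃ X T : g, θ X = X ∧ θ T = -T ∧ ⁅X₀, T⁆ = 0 ∧ ⁅X, X₀⁆ + T = Y := by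
  intro Y hY
  obtain ⟨Z, hZ, hT⟩ := (LieAlgebra.ad K g X₀).exists_mem_map_sub_eq_zero_of_map_mem_map_map
    (by rw [hkey]; exact Submodule.mem_map_of_mem ((hmem_gneg Y).2 hY))
  have hθZ : θ Z = Z := (hmem_h Z).1 hZ
  refine ⟨-Z, Y - ⁅X₀, Z⁆, by rw [map_neg, hθZ], ?_, hT, ?_⟩
  · rw [map_sub, hY, θ.map_lie_eq_neg_of_map_eq_neg_of_map_eq hX₀ hθZ, neg_sub_neg, neg_sub]
  · rw [neg_lie, lie_skew, add_sub_cancel]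

/-- The submersion computation at the heart of Theorem 2.5 of
"On relative cuspidality": assuming `⁅X₀, ⁅X₀, h⁆⁆ = ⁅X₀, g⁻⁆`
(supplied by Lemma 2.4), the linear map `v : h × t⁻ → g⁻`,
`v(X, T) = ⁅X, X₀⁆ + T`, is surjective. -/
theorem theorem_2_5_submersion {K : Type*} [Field K]
    {g : Type*} [LieRing g] [LieAlgebra K g] [FiniteDimensional K g]
    (θ : g →ₗ⁅K⁆ g) (hθθ : ∀ X, θ (θ X) = X)
    (X₀ : g) (hX₀ : θ X₀ = -X₀)
    (h gneg : Submodule K g)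
    (hmem_h : ∀ X, X ∈ h ↔ θ X = X)
    (hmem_gneg : ∀ X, X ∈ gneg ↔ θ X = -X)
    (hkey : Submodule.map (LieAlgebra.ad K g X₀)
        (Submodule.map (LieAlgebra.ad K g X₀) h)
      = Submodule.map (LieAlgebra.ad K g X₀) gneg) :
    ∀ Y : g, θ Y = -Y →
      ∃ X T : g, θ X = X ∧ θ T = -T ∧ ⁅X₀, T⁆ = 0 ∧ ⁅X, X₀⁆ + T = Y :=
  theorem_2_5_submersion_general θ X₀ hX₀ h gneg hmem_h hmem_gneg hkey
end
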